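/- For all real numbers k₁, k₂ > 0 and d₁, d₂ < 0 there exists α₀ > 0 such that for every parameter value α ≥ α₀ the function g₂ = g₂^α satisfies: g₂^α(s₁, k₂) ≤ 0 for all s₁ ∈ [0, k₁], and g₂^α(s₁, d₂) ≥ 0 for all s₁ ∈ [d₁, 0]. -/

import Mathlib

/-!
For `s₁ ≥ 0` and `k₂ > 0`, `g₂^α(s₁, k₂)` factors as `k₂^(p₂-1) (β p₂ s₁^p₁ + γ p₂ - α (p₂+q₂) k₂^q₂)`,
and for `d₂ < 0` (where `d₂⁺ = 0`) `g₂^α(s₁, d₂)` factors as `|d₂|^(p₂-1) (α (p₂+q₂) |d₂|^q₂ - γ p₂)`. Since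
`s₁^p₁ ≤ k₁^p₁` on `[0, k₁]`, both brackets have the right sign as soon as `α (p₂+q₂)` times a
positive constant exceeds a fixed bound, which holds for all large `α`.
-/

open Real Filter Set

lemma exists_pos_forall_ge_of_eventually_atTop {P : ℝ → Prop} (h : ∀ᶠ α in atTop, P α) :
    ∃ α₀ > 0, ∀ α ≥ α₀, P α := by
  obtain ⟨a, ha⟩ := eventually_atTop.1 h
  exact ⟨max a 1, by positivity, fun α hα => ha α (le_of_max_le_left hα)⟩

lemma eventually_le_mul_atTop {a : ℝ} (ha : 0 < a) (c : ℝ) : ∀ᶠ α in atTop, c ≤ α * a :=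
  (tendsto_id.atTop_mul_const ha).eventually_ge_atTop c

namespace Real

lemma abs_rpow_sub_two_mul_of_pos {x : ℝ} (hx : 0 < x) (r : ℝ) :
    |x| ^ (r - 2) * x = x ^ (r - 1) := by
  rw [abs_of_pos hx, ← rpow_add_one hx.ne']
  ring_nf

lemma abs_rpow_sub_two_mul_of_neg {x : ℝ} (hx : x < 0) (r : ℝ) :
    |x| ^ (r - 2) * x = -|x| ^ (r - 1) := by
  rw [← abs_rpow_sub_two_mul_of_pos (abs_pos.2 hx.ne), abs_abs, abs_of_neg hx]
  ring

end Real

section ExampleField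

variable {p₁ p₂ q₂ β γ α : ℝ}

lemma g₂_nonpos_of_pos {k₁ k₂ s₁ : ℝ} (hp₁ : 0 ≤ p₁) (hβp : 0 ≤ β * p₂) (hk₂ : 0 < k₂)
    (hs₁ : s₁ ∈ Icc 0 k₁) (hα : β * p₂ * k₁ ^ p₁ + γ * p₂ ≤ α * ((p₂ + q₂) * k₂ ^ q₂)) :
    -(α * (p₂ + q₂) * |k₂| ^ (p₂ + q₂ - 2) * k₂)
        + β * p₂ * (max s₁ 0) ^ p₁ * (max k₂ 0) ^ (p₂ - 1)
        + γ * p₂ * |k₂| ^ (p₂ - 2) * k₂ ≤ 0 := by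
  have hfactor : -(α * (p₂ + q₂) * |k₂| ^ (p₂ + q₂ - 2) * k₂)
        + β * p₂ * (max s₁ 0) ^ p₁ * (max k₂ 0) ^ (p₂ - 1)
        + γ * p₂ * |k₂| ^ (p₂ - 2) * k₂
      = k₂ ^ (p₂ - 1) * (β * p₂ * s₁ ^ p₁ + γ * p₂ - α * ((p₂ + q₂) * k₂ ^ q₂)) := by
    rw [mul_assoc _ (|k₂| ^ _), mul_assoc _ (|k₂| ^ _), abs_rpow_sub_two_mul_of_pos hk₂,
      abs_rpow_sub_two_mul_of_pos hk₂, max_eq_left hs₁.1, max_eq_left hk₂.le,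
      show p₂ + q₂ - 1 = (p₂ - 1) + q₂ by ring, rpow_add hk₂]
    ring
  have hs₁_pow : s₁ ^ p₁ ≤ k₁ ^ p₁ := rpow_le_rpow hs₁.1 hs₁.2 hp₁
  rw [hfactor]
  refine mul_nonpos_of_nonneg_of_nonpos (rpow_nonneg hk₂.le _) ?_
  linarith [mul_le_mul_of_nonneg_left hs₁_pow hβp]

lemma g₂_nonneg_of_neg {s₁ d₂ : ℝ} (hp₂ : p₂ - 1 ≠ 0) (hd₂ : d₂ < 0)
    (hα : γ * p₂ ≤ α * ((p₂ + q₂) * |d₂| ^ q₂)) :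
    0 ≤ -(α * (p₂ + q₂) * |d₂| ^ (p₂ + q₂ - 2) * d₂)
        + β * p₂ * (max s₁ 0) ^ p₁ * (max d₂ 0) ^ (p₂ - 1)
        + γ * p₂ * |d₂| ^ (p₂ - 2) * d₂ := by
  have hd₂_abs : 0 < |d₂| := abs_pos.2 hd₂.ne
  have hfactor : -(α * (p₂ + q₂) * |d₂| ^ (p₂ + q₂ - 2) * d₂)
        + β * p₂ * (max s₁ 0) ^ p₁ * (max d₂ 0) ^ (p₂ - 1)
        + γ * p₂ * |d₂| ^ (p₂ - 2) * d₂
      = |d₂| ^ (p₂ - 1) * (α * ((p₂ + q₂) * |d₂| ^ q₂) - γ * p₂) := by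
    rw [mul_assoc _ (|d₂| ^ _), mul_assoc _ (|d₂| ^ _), abs_rpow_sub_two_mul_of_neg hd₂,
      abs_rpow_sub_two_mul_of_neg hd₂, max_eq_right hd₂.le, zero_rpow hp₂,
      show p₂ + q₂ - 1 = (p₂ - 1) + q₂ by ring, rpow_add hd₂_abs]
    ring
  rw [hfactor]
  exact mul_nonneg (rpow_nonneg hd₂_abs.le _) (sub_nonneg.2 hα)

end ExampleField

theorem stmt_10_general (p₁ p₂ q₂ β γ : ℝ)
    (hp₁ : 2 ≤ p₁) (hp₂ : 2 ≤ p₂) (hq₂ : 0 < q₂)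
    (hβ : 0 < β)
    (k₁ k₂ d₁ d₂ : ℝ) (hk₂ : 0 < k₂) (hd₂ : d₂ < 0) :
    ∃ α₀ > 0, ∀ α ≥ α₀,
      (∀ s₁ ∈ Set.Icc (0 : ℝ) k₁,
        -(α * (p₂ + q₂) * |k₂| ^ (p₂ + q₂ - 2) * k₂)
          + β * p₂ * (max s₁ 0) ^ p₁ * (max k₂ 0) ^ (p₂ - 1)
          + γ * p₂ * |k₂| ^ (p₂ - 2) * k₂ ≤ 0) ∧
      (∀ s₁ ∈ Set.Icc d₁ (0 : ℝ),
        0 ≤ -(α * (p₂ + q₂) * |d₂| ^ (p₂ + q₂ - 2) * d₂)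
          + β * p₂ * (max s₁ 0) ^ p₁ * (max d₂ 0) ^ (p₂ - 1)
          + γ * p₂ * |d₂| ^ (p₂ - 2) * d₂) := by
  have hpq : 0 < p₂ + q₂ := by linarith
  have hpos := eventually_le_mul_atTop
    (mul_pos hpq (rpow_pos_of_pos hk₂ q₂)) (β * p₂ * k₁ ^ p₁ + γ * p₂)
  have hneg := eventually_le_mul_atTop
    (mul_pos hpq (rpow_pos_of_pos (abs_pos.2 hd₂.ne) q₂)) (γ * p₂)
  refine exists_pos_forall_ge_of_eventually_atTop ((hpos.and hneg).mono fun α hα => ⟨?_, ?_⟩)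
  · exact fun s₁ hs₁ => g₂_nonpos_of_pos (by linarith) (by positivity) hk₂ hs₁ hα.1
  · exact fun s₁ _ => g₂_nonneg_of_neg (by linarith) hd₂ hα.2

/-- Hypothesis (H₁) for `g₂` holds for the example vector field if the
parameter `α` is sufficiently large. -/
theorem stmt_10 (p₁ p₂ q₁ q₂ β γ : ℝ)
    (hp₁ : 2 ≤ p₁) (hp₂ : 2 ≤ p₂) (hq₁ : 0 < q₁) (hq₂ : 0 < q₂)
    (hβ : 0 < β) (hγ : 0 < γ)
    (k₁ k₂ d₁ d₂ : ℝ) (hk₁ : 0 < k₁) (hk₂ : 0 < k₂) (hd₁ : d₁ < 0) (hd₂ : d₂ < 0) :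
    ∃ α₀ > 0, ∀ α ≥ α₀,
      (∀ s₁ ∈ Set.Icc (0 : ℝ) k₁,
        -(α * (p₂ + q₂) * |k₂| ^ (p₂ + q₂ - 2) * k₂)
          + β * p₂ * (max s₁ 0) ^ p₁ * (max k₂ 0) ^ (p₂ - 1)
          + γ * p₂ * |k₂| ^ (p₂ - 2) * k₂ ≤ 0) ∧
      (∀ s₁ ∈ Set.Icc d₁ (0 : ℝ),
        0 ≤ -(α * (p₂ + q₂) * |d₂| ^ (p₂ + q₂ - 2) * d₂)
          + β * p₂ * (max s₁ 0) ^ p₁ * (max d₂ 0) ^ (p₂ - 1)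
          + γ * p₂ * |d₂| ^ (p₂ - 2) * d₂) :=
  stmt_10_general p₁ p₂ q₂ β γ hp₁ hp₂ hq₂ hβ k₁ k₂ d₁ d₂ hk₂ hd₂
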